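/- Let N ≥ 1 and let F ∈ ℚ[x₁,…,x_N] be a symmetric homogeneous polynomial of odd degree d ≥ 1. Then there exist symmetric polynomials R_j ∈ ℚ[x₁,…,x_N], indexed by the odd integers j with 1 ≤ j ≤ min(d,N), such that F = Σ_{j odd, 1 ≤ j ≤ min(d,N)} p_j · R_j, where p_j = x₁^j + ⋯ + x_N^j. -/

import Mathlib

/-!
By Newton's identities `k e_k = ± ∑ ± e_a p_b` (with `a < k`), every elementary symmetric
polynomial, hence every symmetric polynomial, is a polynomial in `p_1, …, p_N`. A product of power
sums is homogeneous of degree the sum of their indices, so the degree-`d` component of that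
expression only involves products of total degree `d`; for odd `d` each such product has a factor
`p_j` with `j` odd and `j ≤ min d N`. Thus `F` lies in the ideal generated by these `p_j`, and
averaging the cofactors over all permutations of the variables makes them symmetric without
changing the sum, because `F` and the `p_j` are symmetric.
-/

namespace MvPolynomial

variable {σ K : Type*} [Fintype σ] [Field K]

section Symmetrize

variable [DecidableEq σ]

noncomputable def symmetrize : MvPolynomial σ K →ₗ[K] MvPolynomial σ K :=
  (Fintype.card (Equiv.Perm σ) : K)⁻¹ • ∑ e : Equiv.Perm σ, (rename e).toLinearMap

theorem symmetrize_apply (p : MvPolynomial σ K) :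
    symmetrize p = (Fintype.card (Equiv.Perm σ) : K)⁻¹ • ∑ e : Equiv.Perm σ, rename e p := by
  simp [symmetrize]

theorem isSymmetric_symmetrize (p : MvPolynomial σ K) : (symmetrize p).IsSymmetric := by
  rw [symmetrize_apply]
  intro τ
  rw [map_smul, map_sum]
  congr 1
  simp_rw [rename_rename]
  exact Fintype.sum_equiv (Equiv.mulLeft τ) _ _ fun e => rfl

theorem IsSymmetric.symmetrize_mul {p : MvPolynomial σ K} (hp : p.IsSymmetric)
    (q : MvPolynomial σ K) : symmetrize (p * q) = p * symmetrize q := by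
  simp only [symmetrize_apply, map_mul, hp _, ← Finset.mul_sum, mul_smul_comm]

variable [CharZero K]

theorem IsSymmetric.symmetrize_eq {p : MvPolynomial σ K} (hp : p.IsSymmetric) :
    symmetrize p = p := by
  simp [symmetrize_apply, hp _, Finset.sum_const, ← Nat.cast_smul_eq_nsmul K, smul_smul]

theorem IsSymmetric.exists_isSymmetric_of_mem_span {ι : Type*} {s : Finset ι}
    {v : ι → MvPolynomial σ K} (hv : ∀ i ∈ s, (v i).IsSymmetric) {F : MvPolynomial σ K}
    (hF : F.IsSymmetric) (hmem : F ∈ Ideal.span (v '' s)) :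
    ∃ R : ι → MvPolynomial σ K, (∀ i, (R i).IsSymmetric) ∧ F = ∑ i ∈ s, v i * R i := by
  obtain ⟨c, hc⟩ := (Submodule.mem_span_image_finset_iff_exists_fun' _).mp hmem
  refine ⟨fun i => symmetrize (c i), fun i => isSymmetric_symmetrize _, ?_⟩
  calc F = symmetrize F := hF.symmetrize_eq.symm
    _ = ∑ i ∈ s, v i * symmetrize (c i) := by
      rw [← hc, map_sum]
      refine Finset.sum_congr rfl fun i hi => ?_
      rw [smul_eq_mul, mul_comm, (hv i hi).symmetrize_mul]

end Symmetrize

variable [CharZero K]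

theorem esymm_mem_adjoin_psum (k : ℕ) :
    esymm σ K k ∈ Algebra.adjoin K (psum σ K '' Set.Icc 1 k) := by
  induction k using Nat.strong_induction_on with
  | _ k ih =>
  rcases Nat.eq_zero_or_pos k with rfl | hk
  · simp
  have hcancel : esymm σ K k = (k : K)⁻¹ • ((k : MvPolynomial σ K) * esymm σ K k) := by
    rw [← nsmul_eq_mul, ← Nat.cast_smul_eq_nsmul K, smul_smul,
      inv_mul_cancel₀ (Nat.cast_ne_zero.mpr hk.ne'), one_smul]
  rw [hcancel, mul_esymm_eq_sum]
  refine Subalgebra.smul_mem _ (mul_mem (pow_mem (neg_mem (one_mem _)) _)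
    (Subalgebra.sum_mem _ fun a ha => ?_)) _
  obtain ⟨hsum, hlt⟩ : a.1 + a.2 = k ∧ a.1 < k := by simpa using ha
  refine mul_mem (mul_mem (pow_mem (neg_mem (one_mem _)) _) ?_) ?_
  · exact Algebra.adjoin_mono (Set.image_mono (Set.Icc_subset_Icc_right (by omega))) (ih _ hlt)
  · exact Algebra.subset_adjoin ⟨a.2, ⟨by omega, by omega⟩, rfl⟩

theorem IsSymmetric.mem_adjoin_psum {F : MvPolynomial σ K} (hF : F.IsSymmetric) :
    F ∈ Algebra.adjoin K (psum σ K '' Set.Icc 1 (Fintype.card σ)) := by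
  obtain ⟨P, hP⟩ := esymmAlgHom_surjective K (n := Fintype.card σ) le_rfl
    ⟨F, (mem_symmetricSubalgebra F).mpr hF⟩
  have hFP : F = aeval (fun i : Fin (Fintype.card σ) => esymm σ K (i + 1)) P := by
    rw [← esymmAlgHom_apply, hP]
  have hPe : F ∈ Algebra.adjoin K
      (Set.range fun i : Fin (Fintype.card σ) => esymm σ K (i + 1)) := by
    rw [Algebra.adjoin_range_eq_range_aeval, hFP]
    exact ⟨P, rfl⟩
  refine Algebra.adjoin_le ?_ hPe
  rintro _ ⟨i, rfl⟩
  exact Algebra.adjoin_mono (Set.image_mono (Set.Icc_subset_Icc_right i.2))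
    (esymm_mem_adjoin_psum _)

section OddPowerSums

variable {R : Type*} [CommSemiring R]

def oddIndices (d n : ℕ) : Finset ℕ := {j ∈ Finset.Icc 1 (min d n) | Odd j}

theorem oddIndices_mono {d e : ℕ} (h : d ≤ e) (n : ℕ) : oddIndices d n ⊆ oddIndices e n :=
  Finset.filter_subset_filter _ (Finset.Icc_subset_Icc_right (min_le_min_right n h))

theorem isHomogeneous_psum (j : ℕ) : (psum σ R j).IsHomogeneous j :=
  IsHomogeneous.sum _ _ _ fun i _ => by simpa using (isHomogeneous_X R i).pow j

theorem exists_isHomogeneous_of_mem_closure_psum {n : ℕ} {x : MvPolynomial σ R}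
    (hx : x ∈ Submonoid.closure (psum σ R '' Set.Icc 1 n)) :
    ∃ e, x.IsHomogeneous e ∧ (Odd e → x ∈ Ideal.span (psum σ R '' oddIndices e n)) := by
  induction hx using Submonoid.closure_induction with
  | mem x hx =>
    obtain ⟨j, hj, rfl⟩ := hx
    refine ⟨j, isHomogeneous_psum j, fun hodd => Ideal.subset_span ⟨j, ?_, rfl⟩⟩
    simp only [oddIndices, Finset.coe_filter, Finset.mem_Icc, Set.mem_ofPred_eq]
    exact ⟨⟨hj.1, le_min le_rfl hj.2⟩, hodd⟩
  | one => exact ⟨0, isHomogeneous_one _ _, fun h => absurd h Nat.not_odd_zero⟩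
  | mul x y _ _ ihx ihy =>
    obtain ⟨e, hx, hxe⟩ := ihx
    obtain ⟨f, hy, hyf⟩ := ihy
    refine ⟨e + f, hx.mul hy, fun hodd => ?_⟩
    by_cases he : Odd e
    · exact Ideal.span_mono (Set.image_mono (oddIndices_mono (Nat.le_add_right e f) n))
        (Ideal.mul_mem_right y _ (hxe he))
    · have hf : Odd f := Nat.not_even_iff_odd.mp fun h => he ((Nat.odd_add.mp hodd).mpr h)
      exact Ideal.span_mono (Set.image_mono (oddIndices_mono (Nat.le_add_left f e) n))
        (Ideal.mul_mem_left _ x (hyf hf))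

theorem homogeneousComponent_mem_span_psum_oddIndices {n d : ℕ} (hd : Odd d)
    {x : MvPolynomial σ R} (hx : x ∈ Algebra.adjoin R (psum σ R '' Set.Icc 1 n)) :
    homogeneousComponent d x ∈ Ideal.span (psum σ R '' oddIndices d n) := by
  rw [← Subalgebra.mem_toSubmodule, Algebra.adjoin_eq_span] at hx
  induction hx using Submodule.span_induction with
  | mem x hx =>
    obtain ⟨e, he, hxe⟩ := exists_isHomogeneous_of_mem_closure_psum hx
    rw [homogeneousComponent_of_mem he]
    split_ifs with hde
    · exact hde ▸ hxe (hde ▸ hd)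
    · exact zero_mem _
  | zero => simp
  | add x y _ _ ihx ihy => simpa using add_mem ihx ihy
  | smul r x _ ihx => simpa [smul_eq_C_mul] using Ideal.mul_mem_left _ (C r) ihx

end OddPowerSums

end MvPolynomial

open MvPolynomial

theorem symmetric_odd_form_odd_powersum_decomposition_general
    (N : ℕ) (d : ℕ) (hd : Odd d)
    (F : MvPolynomial (Fin N) ℚ)
    (hsym : F.IsSymmetric) (hhom : F.IsHomogeneous d) :
    ∃ R : ℕ → MvPolynomial (Fin N) ℚ,
      (∀ j, (R j).IsSymmetric) ∧
      F = ∑ j ∈ (Finset.Icc 1 (min d N)).filter (fun j => Odd j),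
            (∑ i, X i ^ j) * R j := by
  have hadjoin : F ∈ Algebra.adjoin ℚ (psum (Fin N) ℚ '' Set.Icc 1 N) := by
    simpa using hsym.mem_adjoin_psum
  have hspan : F ∈ Ideal.span (psum (Fin N) ℚ '' oddIndices d N) := by
    simpa [homogeneousComponent_eq_self hhom] using
      homogeneousComponent_mem_span_psum_oddIndices hd hadjoin
  exact hsym.exists_isSymmetric_of_mem_span (fun j _ => psum_isSymmetric _ _ j) hspan

/-- Every symmetric homogeneous polynomial of odd degree `d` in `N` variables can be written as
`Σ p_j · R_j`, the sum ranging over odd `j` with `1 ≤ j ≤ min d N`, where the `R_j` are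
symmetric polynomials and `p_j = x₁^j + ⋯ + x_N^j`. -/
theorem symmetric_odd_form_odd_powersum_decomposition
    (N : ℕ) (hN : 1 ≤ N) (d : ℕ) (hd : Odd d) (hd1 : 1 ≤ d)
    (F : MvPolynomial (Fin N) ℚ)
    (hsym : F.IsSymmetric) (hhom : F.IsHomogeneous d) :
    ∃ R : ℕ → MvPolynomial (Fin N) ℚ,
      (∀ j, (R j).IsSymmetric) ∧
      F = ∑ j ∈ (Finset.Icc 1 (min d N)).filter (fun j => Odd j),
            (∑ i, X i ^ j) * R j :=
  symmetric_odd_form_odd_powersum_decomposition_general N d hd F hsym hhom
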